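/- arXiv:1411.5408 — 6 statements merged into one kernel-verified Lean document; each statement's English description precedes it below -/
import Mathlib

section
/- Let p > 1 and p' = p/(p−1). The function φ(M) = p^p / ((p−1)·(M + (p−1))^{p−1}) defined on [0,1] satisfies: (i) 0 ≤ φ(M) ≤ (p')^p; (ii) φ'(M) ≤ −1; (iii) φ(M)·φ''(M) − p'·(φ'(M))^2 ≥ 0, for all M ∈ [0,1]. -/
/-!
On `[0,1]` the base `M + (p - 1)` is positive, so `φ` is the power law
`M ↦ c (M + p - 1)^s` with `c = pᵖ/(p-1)` and `s = 1 - p`. For any power law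
`f = c u^s` one has `f f'' = (s-1)/s · f'²`, and `(s-1)/s = p'` for `s = 1 - p`; so (iii)
holds with equality. Moreover `φ'(M) = -(p/(M+p-1))ᵖ ≤ -1` since `M + p - 1 ≤ p`, and `φ`
is largest at `M = 0`, where it equals `(p')ᵖ`.
-/

open Real Filter Topology

section PowerLaw

variable {c a s x : ℝ}

lemma hasDerivAt_const_mul_add_rpow (hx : 0 < x + a) :
    HasDerivAt (fun y => c * (y + a) ^ s) (c * s * (x + a) ^ (s - 1)) x := by
  refine (((hasDerivAt_id' x).add_const a).rpow_const (Or.inl hx.ne')).const_mul c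
    |>.congr_deriv ?_
  ring

lemma deriv_const_mul_add_rpow (hx : 0 < x + a) :
    deriv (fun y => c * (y + a) ^ s) x = c * s * (x + a) ^ (s - 1) :=
  hasDerivAt_const_mul_add_rpow hx |>.deriv

lemma deriv_deriv_const_mul_add_rpow (hx : 0 < x + a) :
    deriv (deriv fun y => c * (y + a) ^ s) x = c * s * (s - 1) * (x + a) ^ (s - 2) := by
  have hderiv : deriv (fun y => c * (y + a) ^ s) =ᶠ[𝓝 x]
      fun y => c * s * (y + a) ^ (s - 1) := by
    filter_upwards [lt_mem_nhds (show -a < x by linarith)] with y hy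
    exact deriv_const_mul_add_rpow (by linarith)
  rw [hderiv.deriv_eq, deriv_const_mul_add_rpow hx, sub_sub, one_add_one_eq_two]

lemma mul_deriv_deriv_const_mul_add_rpow (hx : 0 < x + a) (hs : s ≠ 0) :
    c * (x + a) ^ s * deriv (deriv fun y => c * (y + a) ^ s) x =
      (s - 1) / s * deriv (fun y => c * (y + a) ^ s) x ^ 2 := by
  have hsplit : (x + a) ^ s * (x + a) ^ (s - 2) = ((x + a) ^ (s - 1)) ^ 2 := by
    rw [← rpow_add hx, ← rpow_natCast, ← rpow_mul hx.le]
    ring_nf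
  rw [deriv_deriv_const_mul_add_rpow hx, deriv_const_mul_add_rpow hx]
  field_simp
  linear_combination c ^ 2 * (s - 1) * hsplit

end PowerLaw

lemma eventuallyEq_phi_powerLaw {p : ℝ} {φ : ℝ → ℝ}
    (hφ : ∀ M : ℝ, φ M = p ^ p / ((p - 1) * (M + (p - 1)) ^ (p - 1))) {M : ℝ}
    (hM : 0 < M + (p - 1)) :
    φ =ᶠ[𝓝 M] fun y => p ^ p / (p - 1) * (y + (p - 1)) ^ (1 - p) := by
  filter_upwards [lt_mem_nhds (show -(p - 1) < M by linarith)] with y hy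
  rw [hφ, show 1 - p = -(p - 1) by ring, rpow_neg (by linarith), div_mul_eq_div_div,
    div_eq_mul_inv _ ((y + (p - 1)) ^ (p - 1))]

/-- The explicit function `φ(M) = pᵖ/((p−1)(M+(p−1))^{p−1})` on `[0,1]` satisfies
`0 ≤ φ ≤ (p')ᵖ`, `φ' ≤ −1` and `φ·φ'' − p'·(φ')² ≥ 0`. -/
theorem explicit_phi_properties (p : ℝ) (hp : 1 < p) (φ : ℝ → ℝ)
    (hφ : ∀ M : ℝ, φ M = p ^ p / ((p - 1) * (M + (p - 1)) ^ (p - 1))) :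
    ∀ M ∈ Set.Icc (0 : ℝ) 1,
      (0 ≤ φ M ∧ φ M ≤ (p / (p - 1)) ^ p) ∧
      deriv φ M ≤ -1 ∧
      0 ≤ φ M * deriv (deriv φ) M - (p / (p - 1)) * (deriv φ M) ^ 2 := by
  rintro M ⟨hM0, hM1⟩
  have hp1 : 0 < p - 1 := sub_pos.2 hp
  have hx : 0 < M + (p - 1) := by linarith
  have hφf := eventuallyEq_phi_powerLaw hφ hx
  have hd1 : deriv φ M = -(p / (M + (p - 1))) ^ p := by
    rw [hφf.deriv_eq, deriv_const_mul_add_rpow hx, div_rpow (by linarith) hx.le,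
      show 1 - p - 1 = -p by ring, rpow_neg hx.le]
    field_simp
    ring
  refine ⟨⟨by rw [hφ]; positivity, ?_⟩, ?_, ?_⟩
  · have hbase : (p - 1) * (p - 1) ^ (p - 1) = (p - 1) ^ p := by
      rw [rpow_sub_one hp1.ne']
      field_simp
    rw [hφ, div_rpow (by linarith) hp1.le, ← hbase]
    gcongr
    linarith
  · rw [hd1, neg_le_neg_iff]
    exact one_le_rpow ((one_le_div hx).2 (by linarith)) (by linarith)
  · have hexp : p / (p - 1) = (1 - p - 1) / (1 - p) := by
      rw [sub_sub_cancel_left, ← neg_sub p 1, neg_div_neg_eq]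
    rw [hφf.eq_of_nhds, hφf.deriv_eq, hφf.deriv.deriv_eq, hexp,
      mul_deriv_deriv_const_mul_add_rpow hx (by linarith), sub_self]
end

section
/- Let p > 1, p' = p/(p−1). Define u(f, M) = −(p·f)^p / ((p−1)·(M + p − 1)^{p−1}) for f ≥ 0, 0 ≤ M ≤ 1. Then u satisfies: (i) −(p')^p·f^p ≤ u(f, M) ≤ 0; (ii) u(t·f, M) = t^p·u(f, M) for t ≥ 0; (iii) ∂u/∂M (f, M) ≥ f^p; and (iv) u is concave in (f, M) on the domain {f ≥ 0, 0 ≤ M ≤ 1}. -/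
/-!
With `y = M + p - 1 ∈ [p - 1, p]` we have `u = -(pᵖ / (p - 1)) · fᵖ / y^(p-1)`. The map
`(f, y) ↦ fᵖ / y^(p-1) = y · (f / y)ᵖ` is the perspective of the convex function `t ↦ tᵖ`, hence
jointly convex, which gives concavity of `u`. The bounds and `∂u/∂M = (p f / y)ᵖ ≥ fᵖ` come from
`p - 1 ≤ y ≤ p`.
-/

open Set

theorem ConvexOn.perspective {s : Set ℝ} {φ : ℝ → ℝ} (hφ : ConvexOn ℝ s φ) :
    ConvexOn ℝ {q : ℝ × ℝ | 0 < q.2 ∧ q.1 / q.2 ∈ s} fun q => q.2 * φ (q.1 / q.2) := by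
  have hweights : ∀ ⦃x₁ y₁ x₂ y₂ a b : ℝ⦄, 0 < y₁ → 0 < y₂ → 0 ≤ a → 0 ≤ b → a + b = 1 →
      0 < a * y₁ + b * y₂ ∧ a * y₁ / (a * y₁ + b * y₂) + b * y₂ / (a * y₁ + b * y₂) = 1 ∧
      (a * x₁ + b * x₂) / (a * y₁ + b * y₂) =
        a * y₁ / (a * y₁ + b * y₂) * (x₁ / y₁) + b * y₂ / (a * y₁ + b * y₂) * (x₂ / y₂) := by
    intro x₁ y₁ x₂ y₂ a b hy₁ hy₂ ha hb hab
    have hY : 0 < a * y₁ + b * y₂ := convex_Ioi (0 : ℝ) hy₁ hy₂ ha hb hab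
    exact ⟨hY, by field_simp, by field_simp⟩
  refine ⟨?_, ?_⟩
  · rintro ⟨x₁, y₁⟩ ⟨hy₁, hz₁⟩ ⟨x₂, y₂⟩ ⟨hy₂, hz₂⟩ a b ha hb hab
    obtain ⟨hY, hw, hz⟩ := hweights (x₁ := x₁) (x₂ := x₂) hy₁ hy₂ ha hb hab
    refine ⟨hY, ?_⟩
    simp only [Prod.smul_mk, Prod.mk_add_mk, smul_eq_mul, hz]
    exact hφ.1 hz₁ hz₂ (by positivity) (by positivity) hw
  · rintro ⟨x₁, y₁⟩ ⟨hy₁, hz₁⟩ ⟨x₂, y₂⟩ ⟨hy₂, hz₂⟩ a b ha hb hab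
    obtain ⟨hY, hw, hz⟩ := hweights (x₁ := x₁) (x₂ := x₂) hy₁ hy₂ ha hb hab
    simp only [Prod.smul_mk, Prod.mk_add_mk, smul_eq_mul, hz]
    calc (a * y₁ + b * y₂) * φ (a * y₁ / (a * y₁ + b * y₂) * (x₁ / y₁) +
            b * y₂ / (a * y₁ + b * y₂) * (x₂ / y₂))
        ≤ (a * y₁ + b * y₂) * (a * y₁ / (a * y₁ + b * y₂) * φ (x₁ / y₁) +
            b * y₂ / (a * y₁ + b * y₂) * φ (x₂ / y₂)) :=
          mul_le_mul_of_nonneg_left (hφ.2 hz₁ hz₂ (by positivity) (by positivity) hw) hY.le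
      _ = a * (y₁ * φ (x₁ / y₁)) + b * (y₂ * φ (x₂ / y₂)) := by
          field_simp

theorem convexOn_rpow_div_rpow_sub_one {p : ℝ} (hp : 1 ≤ p) :
    ConvexOn ℝ (Ici 0 ×ˢ Ioi 0) fun q : ℝ × ℝ => q.1 ^ p / q.2 ^ (p - 1) := by
  refine ((convexOn_rpow hp).perspective.subset ?_ ((convex_Ici 0).prod (convex_Ioi 0))).congr ?_
  · exact fun q ⟨hx, hy⟩ => ⟨hy, mem_Ici.2 (div_nonneg hx (le_of_lt hy))⟩
  · rintro ⟨x, y⟩ ⟨hx, hy : 0 < y⟩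
    simp only [Real.div_rpow hx hy.le, Real.rpow_sub_one hy.ne']
    field_simp

noncomputable def burkholderHull (p f M : ℝ) : ℝ :=
  -((p * f) ^ p) / ((p - 1) * (M + p - 1) ^ (p - 1))

section

variable {p f M : ℝ}

theorem burkholderHull_eq (hp : 0 ≤ p) (hf : 0 ≤ f) :
    burkholderHull p f M = -(p ^ p / (p - 1)) * (f ^ p / (M + p - 1) ^ (p - 1)) := by
  rw [burkholderHull, Real.mul_rpow hp hf, neg_div, mul_div_mul_comm, neg_mul]

theorem burkholderHull_nonpos (hp : 1 ≤ p) (hf : 0 ≤ f) (hM : 0 ≤ M) :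
    burkholderHull p f M ≤ 0 := by
  rw [burkholderHull_eq (by linarith) hf]
  have hc : 0 ≤ p ^ p / (p - 1) := div_nonneg (Real.rpow_nonneg (by linarith) p) (by linarith)
  exact mul_nonpos_of_nonpos_of_nonneg (neg_nonpos.2 hc)
    (div_nonneg (Real.rpow_nonneg hf p) (Real.rpow_nonneg (by linarith) _))

theorem neg_rpow_mul_rpow_le_burkholderHull (hp : 1 < p) (hf : 0 ≤ f) (hM : 0 ≤ M) :
    -(p / (p - 1)) ^ p * f ^ p ≤ burkholderHull p f M := by
  have hp₁ : 0 < p - 1 := by linarith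
  have hconst : (p / (p - 1)) ^ p = p ^ p / (p - 1) * (1 / (p - 1) ^ (p - 1)) := by
    rw [Real.div_rpow (by linarith) hp₁.le, Real.rpow_sub_one hp₁.ne']
    field_simp
  have hden : f ^ p / (M + p - 1) ^ (p - 1) ≤ f ^ p / (p - 1) ^ (p - 1) :=
    div_le_div_of_nonneg_left (Real.rpow_nonneg hf p) (Real.rpow_pos_of_pos hp₁ _)
      (Real.rpow_le_rpow hp₁.le (by linarith) hp₁.le)
  rw [burkholderHull_eq (by linarith) hf, hconst, neg_mul, neg_mul, neg_le_neg_iff, mul_assoc,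
    one_div_mul_eq_div]
  exact mul_le_mul_of_nonneg_left hden (div_nonneg (Real.rpow_nonneg (by linarith) p) hp₁.le)

theorem burkholderHull_mul_left {t : ℝ} (ht : 0 ≤ t) (hp : 0 ≤ p) (hf : 0 ≤ f) :
    burkholderHull p (t * f) M = t ^ p * burkholderHull p f M := by
  rw [burkholderHull_eq hp (mul_nonneg ht hf), burkholderHull_eq hp hf, Real.mul_rpow ht hf]
  ring

theorem hasDerivAt_burkholderHull (hp : p ≠ 1) (hM : 0 < M + p - 1) :
    HasDerivAt (burkholderHull p f) ((p * f) ^ p / (M + p - 1) ^ p) M := by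
  have hp₁ : p - 1 ≠ 0 := sub_ne_zero.2 hp
  have hpow_p : (M + p - 1) ^ p ≠ 0 := (Real.rpow_pos_of_pos hM p).ne'
  have hpow_p₁ : (M + p - 1) ^ (p - 1) ≠ 0 := (Real.rpow_pos_of_pos hM (p - 1)).ne'
  have hden : HasDerivAt (fun M => (p - 1) * (M + p - 1) ^ (p - 1))
      ((p - 1) * (1 * (p - 1) * (M + p - 1) ^ (p - 1 - 1))) M :=
    ((((hasDerivAt_id M).add_const p).sub_const 1).rpow_const (Or.inl hM.ne')).const_mul _
  refine ((hasDerivAt_const M (-((p * f) ^ p))).fun_div hden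
    (mul_ne_zero hp₁ hpow_p₁)).congr_deriv ?_
  have hpow : (M + p - 1) ^ (p - 1 - 1) * (M + p - 1) ^ p = ((M + p - 1) ^ (p - 1)) ^ 2 := by
    rw [sq, ← Real.rpow_add hM, ← Real.rpow_add hM]
    ring_nf
  field_simp
  linear_combination (p - 1) * (p * f) ^ p * hpow

theorem rpow_le_deriv_burkholderHull (hp : 1 < p) (hf : 0 ≤ f) (hM : M ∈ Icc 0 1) :
    f ^ p ≤ deriv (burkholderHull p f) M := by
  have hy : 0 < M + p - 1 := by linarith [hM.1]
  rw [(hasDerivAt_burkholderHull hp.ne' hy).deriv, ← Real.div_rpow (by positivity) hy.le]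
  refine Real.rpow_le_rpow hf ((le_div_iff₀ hy).2 ?_) (by linarith)
  nlinarith [hM.2]

theorem concaveOn_burkholderHull (hp : 1 < p) :
    ConcaveOn ℝ (Ici 0 ×ˢ Ioi (1 - p)) fun q : ℝ × ℝ => burkholderHull p q.1 q.2 := by
  have hshift := (convexOn_rpow_div_rpow_sub_one hp.le).translate_right ((0, p - 1) : ℝ × ℝ)
  have hdom : Ici 0 ×ˢ Ioi (1 - p) ⊆ (fun z => ((0, p - 1) : ℝ × ℝ) + z) ⁻¹' (Ici 0 ×ˢ Ioi 0) :=
    fun q ⟨hx, hy⟩ => ⟨by simpa using hx, by simp at hy ⊢; linarith⟩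
  refine ((hshift.subset hdom ((convex_Ici 0).prod (convex_Ioi _))).neg.smul
    (c := p ^ p / (p - 1)) (div_nonneg (Real.rpow_nonneg (by linarith) p) (by linarith))).congr ?_
  rintro ⟨f, M⟩ ⟨hf : 0 ≤ f, -⟩
  simp only [Function.comp_apply, Prod.mk_add_mk, zero_add, Pi.neg_apply, smul_eq_mul]
  rw [burkholderHull_eq (by linarith) hf, add_comm (p - 1) M, add_sub_assoc, mul_neg, neg_mul]

end

/-- The Burkhölder hull candidate `u(f,M) = −(pf)ᵖ/((p−1)(M+p−1)^{p−1})` satisfies the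
bounds, homogeneity, `∂u/∂M ≥ fᵖ` and joint concavity on `{f ≥ 0, 0 ≤ M ≤ 1}`. -/
theorem burkholder_hull_properties (p : ℝ) (hp : 1 < p) (u : ℝ → ℝ → ℝ)
    (hu : ∀ f M : ℝ, u f M = -((p * f) ^ p) / ((p - 1) * (M + p - 1) ^ (p - 1))) :
    (∀ f ∈ Ici (0 : ℝ), ∀ M ∈ Icc (0 : ℝ) 1,
        -(p / (p - 1)) ^ p * f ^ p ≤ u f M ∧ u f M ≤ 0) ∧
    (∀ t : ℝ, 0 ≤ t → ∀ f ∈ Ici (0 : ℝ), ∀ M ∈ Icc (0 : ℝ) 1,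
        u (t * f) M = t ^ p * u f M) ∧
    (∀ f ∈ Ici (0 : ℝ), ∀ M ∈ Icc (0 : ℝ) 1,
        f ^ p ≤ deriv (fun M' => u f M') M) ∧
    ConcaveOn ℝ (Ici (0 : ℝ) ×ˢ Icc (0 : ℝ) 1) (fun q : ℝ × ℝ => u q.1 q.2) := by
  obtain rfl : u = burkholderHull p := funext₂ hu
  have hdom : Ici (0 : ℝ) ×ˢ Icc (0 : ℝ) 1 ⊆ Ici 0 ×ˢ Ioi (1 - p) :=
    prod_mono subset_rfl fun M hM => show 1 - p < M by linarith [hM.1]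
  refine ⟨fun f hf M hM => ⟨neg_rpow_mul_rpow_le_burkholderHull hp hf hM.1,
      burkholderHull_nonpos hp.le hf hM.1⟩,
    fun t ht f hf M _ => burkholderHull_mul_left ht (by linarith) hf,
    fun f hf M hM => rpow_le_deriv_burkholderHull hp hf hM,
    (concaveOn_burkholderHull hp).subset hdom ((convex_Ici 0).prod (convex_Icc 0 1))⟩
end

section
/- Let p > 1 and let u(f,M) = f^p·ψ(M) for f ≥ 0, where ψ : [0,1] → ℝ is twice differentiable. Then u is (jointly) concave on {f ≥ 0, 0 ≤ M ≤ 1} if and only if ψ(M) ≤ 0 and ψ(M)·ψ''(M) − (p/(p−1))·(ψ'(M))^2 ≥ 0 for all M ∈ [0,1]. -/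
/-!
Along a line `t ↦ (f + t v, M + t w)` with `f > 0`, the function `u = fᵖ ψ(M)` has second
derivative `f ^ (p - 2) * hessianForm M v (f w)`, where `hessianForm M` is the Hessian of `u`
at `(1, M)`. So `u` is concave exactly when every `hessianForm M` is negative semidefinite, i.e.
`p (p - 1) ψ ≤ 0`, `ψ'' ≤ 0` and `(p ψ')² ≤ p (p - 1) ψ ψ''`. At an endpoint of `[0, 1]` only
directions pointing into the interval can be tested, which suffices because
`hessianForm M a b = hessianForm M (-a) (-b)`. Conversely, `ψ'' ≤ 0` follows from the
discriminant condition where `ψ < 0`, and at an interior zero of `ψ ≤ 0` from `ψ` having a local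
maximum there; segments through a zero at an endpoint have `w = 0`, where only `ψ ≤ 0` matters.
-/

open Set Filter Topology

section Segment

variable {𝕜 E β : Type*} [Field 𝕜] [LinearOrder 𝕜] [AddCommGroup E] [Module 𝕜 E]
  [AddCommMonoid β] [PartialOrder β] [SMul 𝕜 β] {s : Set E} {F : E → β}

theorem ConcaveOn.comp_line (hF : ConcaveOn 𝕜 s F) (x d : E) :
    ConcaveOn 𝕜 {t : 𝕜 | x + t • d ∈ s} (fun t => F (x + t • d)) := by
  convert hF.comp_affineMap (AffineMap.lineMap x (x + d)) using 1 <;>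
    ext <;> simp [AffineMap.lineMap_apply_module', add_comm]

theorem concaveOn_of_concaveOn_segment [IsStrictOrderedRing 𝕜] (hs : Convex 𝕜 s)
    (h : ∀ x ∈ s, ∀ y ∈ s, ConcaveOn 𝕜 (Icc 0 1) (fun t : 𝕜 => F (x + t • (y - x)))) :
    ConcaveOn 𝕜 s F := by
  refine ⟨hs, fun x hx y hy a b ha hb hab => ?_⟩
  have key := (h x hx y hy).2 (left_mem_Icc.2 zero_le_one) (right_mem_Icc.2 zero_le_one)
    ha hb hab
  have hseg : x + b • (y - x) = a • x + b • y := by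
    rw [eq_sub_of_add_eq hab, sub_smul, one_smul, smul_sub]
    abel
  simpa [hseg] using key

end Segment

theorem add_mul_sub_mem_Ioo {a b x y t : ℝ} (hx : x ∈ Icc a b) (hy : y ∈ Icc a b) (hxy : x ≠ y)
    (ht : t ∈ Ioo 0 1) : x + t * (y - x) ∈ Ioo a b := by
  obtain ⟨hx₀, hx₁⟩ := hx
  obtain ⟨hy₀, hy₁⟩ := hy
  obtain ⟨ht₀, ht₁⟩ := ht
  rcases hxy.lt_or_gt with h | h <;> constructor <;> nlinarith

theorem ConcaveOn.le_zero_of_hasDerivWithinAt_deriv {s : Set ℝ} {φ φ' : ℝ → ℝ} {x c : ℝ}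
    (hφ : ConcaveOn ℝ s φ) (hφ' : ∀ t ∈ s, HasDerivAt φ (φ' t) t)
    (hφ'' : HasDerivWithinAt φ' c s x) (hx : AccPt x (𝓟 s)) : c ≤ 0 := by
  have hanti : AntitoneOn φ' s :=
    (hφ.antitoneOn_deriv fun t ht => (hφ' t ht).differentiableAt).congr
      fun t ht => (hφ' t ht).deriv
  exact hφ''.nonpos_of_antitoneOn hx hanti

theorem IsLocalMax.le_zero_of_hasDerivAt_deriv {f f' : ℝ → ℝ} {x c : ℝ} (hmax : IsLocalMax f x)
    (hf : ∀ y, HasDerivAt f (f' y) y) (hf' : HasDerivAt f' c x) : c ≤ 0 := by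
  by_contra! hc
  have hderiv : deriv f = f' := funext fun y => (hf y).deriv
  have hmin : IsLocalMin f x :=
    isLocalMin_of_deriv_deriv_pos (by rwa [hderiv, hf'.deriv])
      (by rw [hderiv]; exact hmax.hasDerivAt_eq_zero (hf x)) (hf x).continuousAt
  have hconst : f =ᶠ[𝓝 x] fun _ => f x := by
    filter_upwards [hmax, hmin] with y hmax hmin using le_antisymm hmax hmin
  have hzero : f' =ᶠ[𝓝 x] fun _ => 0 := by
    simpa [hderiv] using hconst.deriv
  exact hc.ne' <| (hf'.congr_of_eventuallyEq hzero.symm).unique (hasDerivAt_const x 0)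

theorem quadratic_nonpos_of_discrim {A B C : ℝ} (hA : A ≤ 0) (hC : C ≤ 0) (h : B ^ 2 ≤ A * C)
    (a b : ℝ) : a ^ 2 * A + 2 * a * b * B + b ^ 2 * C ≤ 0 := by
  rcases hA.lt_or_eq with hA | rfl
  · nlinarith [sq_nonneg (a * A + b * B), mul_nonneg (sq_nonneg b) (sub_nonneg.2 h)]
  · obtain rfl : B = 0 := by nlinarith [sq_nonneg B]
    nlinarith [sq_nonneg b]

theorem nonpos_and_discrim_of_quadratic_nonpos {A B C : ℝ}
    (h : ∀ a : ℝ, a ^ 2 * A + 2 * a * B + C ≤ 0) : A ≤ 0 ∧ B ^ 2 ≤ A * C := by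
  have hdiscrim : B ^ 2 ≤ A * C := by
    have := discrim_le_zero_of_nonpos fun a =>
      (by linarith [h a, sq a] : A * (a * a) + 2 * B * a + C ≤ 0)
    unfold discrim at this
    linarith
  refine ⟨?_, hdiscrim⟩
  by_contra! hA
  have hC : 0 ≤ C := nonneg_of_mul_nonneg_right (le_trans (sq_nonneg B) hdiscrim) hA
  linarith [h 1, h (-1)]

theorem psi_conditions_iff {p x y z : ℝ} (hp : 1 < p) :
    (p * (p - 1) * x ≤ 0 ∧ (p * y) ^ 2 ≤ p * (p - 1) * x * z) ↔
      (x ≤ 0 ∧ 0 ≤ x * z - p / (p - 1) * y ^ 2) := by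
  have hp1 : p - 1 ≠ 0 := by linarith
  have hpp : 0 < p * (p - 1) := mul_pos (by linarith) (by linarith)
  have key : p * (p - 1) * x * z - (p * y) ^ 2 =
      p * (p - 1) * (x * z - p / (p - 1) * y ^ 2) := by
    field_simp
  refine and_congr ?_ ?_
  · constructor <;> intro h <;> nlinarith
  · rw [← sub_nonneg, key]
    exact mul_nonneg_iff_of_pos_left hpp

def hessianForm (p : ℝ) (ψ ψ' ψ'' : ℝ → ℝ) (M a b : ℝ) : ℝ :=
  a ^ 2 * (p * (p - 1) * ψ M) + 2 * a * b * (p * ψ' M) + b ^ 2 * ψ'' M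

section Hessian

variable {p : ℝ} {ψ ψ' ψ'' : ℝ → ℝ}

theorem hasDerivAt_line (f v t : ℝ) : HasDerivAt (fun s => f + s * v) v t := by
  simpa using ((hasDerivAt_id t).mul_const v).const_add f

theorem hasDerivAt_rpow_mul_comp_line (hψ' : ∀ M, HasDerivAt ψ (ψ' M) M) {f v M w t : ℝ}
    (ht : 0 < f + t * v) :
    HasDerivAt (fun s => (f + s * v) ^ p * ψ (M + s * w))
      ((f + t * v) ^ (p - 1) * (p * v * ψ (M + t * w) + (f + t * v) * w * ψ' (M + t * w))) t := by
  refine (((hasDerivAt_line f v t).rpow_const (p := p) (Or.inl ht.ne')).mul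
    ((hψ' _).comp t (hasDerivAt_line M w t))).congr_deriv ?_
  have hpow : (f + t * v) ^ p = (f + t * v) ^ (p - 1) * (f + t * v) := by
    rw [← Real.rpow_add_one ht.ne', sub_add_cancel]
  simp only [Function.comp_apply, hpow]
  ring

theorem hasDerivAt_deriv_rpow_mul_comp_line (hψ' : ∀ M, HasDerivAt ψ (ψ' M) M)
    (hψ'' : ∀ M, HasDerivAt ψ' (ψ'' M) M) {f v M w t : ℝ} (ht : 0 < f + t * v) :
    HasDerivAt
      (fun s => (f + s * v) ^ (p - 1) * (p * v * ψ (M + s * w) + (f + s * v) * w * ψ' (M + s * w)))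
      ((f + t * v) ^ (p - 2) * hessianForm p ψ ψ' ψ'' (M + t * w) v ((f + t * v) * w)) t := by
  have hF := hasDerivAt_line f v t
  have hG := hasDerivAt_line M w t
  refine ((hF.rpow_const (p := p - 1) (Or.inl ht.ne')).mul
    ((((hψ' _).comp t hG).const_mul (p * v)).add
      ((hF.mul_const w).mul ((hψ'' _).comp t hG)))).congr_deriv ?_
  rw [show p - 1 - 1 = p - 2 by ring, show p - 1 = p - 2 + 1 by ring,
    Real.rpow_add_one ht.ne', hessianForm]
  simp only [Function.comp_apply, Pi.add_apply, Pi.mul_apply]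
  ring

theorem hessianForm_nonpos_of_concaveOn (hψ' : ∀ M, HasDerivAt ψ (ψ' M) M)
    (hψ'' : ∀ M, HasDerivAt ψ' (ψ'' M) M)
    (hconc : ConcaveOn ℝ (Ici 0 ×ˢ Icc 0 1) (fun q : ℝ × ℝ => q.1 ^ p * ψ q.2))
    {M a b ε : ℝ} (hε : 0 < ε) (hline : ∀ t ∈ Icc 0 ε, 0 < 1 + t * a ∧ M + t * b ∈ Icc 0 1) :
    hessianForm p ψ ψ' ψ'' M a b ≤ 0 := by
  have hφ : ConcaveOn ℝ (Icc 0 ε) (fun t => (1 + t * a) ^ p * ψ (M + t * b)) :=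
    (hconc.comp_line (1, M) (a, b)).subset
      (fun t ht => ⟨(hline t ht).1.le, (hline t ht).2⟩) (convex_Icc 0 ε)
  have hacc : AccPt (0 : ℝ) (𝓟 (Icc 0 ε)) := by
    rw [accPt_principal_iff_nhdsWithin, Icc_sdiff_left]
    exact left_nhdsWithin_Ioc_neBot hε
  have h := hφ.le_zero_of_hasDerivWithinAt_deriv
    (fun t ht => hasDerivAt_rpow_mul_comp_line hψ' (hline t ht).1)
    (hasDerivAt_deriv_rpow_mul_comp_line hψ' hψ'' (hline 0 ⟨le_rfl, hε.le⟩).1).hasDerivWithinAt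
    hacc
  simpa using h

theorem psi_conditions_of_concaveOn (hp : 1 < p) (hψ' : ∀ M, HasDerivAt ψ (ψ' M) M)
    (hψ'' : ∀ M, HasDerivAt ψ' (ψ'' M) M)
    (hconc : ConcaveOn ℝ (Ici 0 ×ˢ Icc 0 1) (fun q : ℝ × ℝ => q.1 ^ p * ψ q.2))
    {M : ℝ} (hM : M ∈ Icc 0 1) :
    ψ M ≤ 0 ∧ 0 ≤ ψ M * ψ'' M - p / (p - 1) * ψ' M ^ 2 := by
  obtain ⟨σ, hσ, hinward⟩ :
      ∃ σ : ℝ, σ ^ 2 = 1 ∧ ∀ t ∈ Icc (0 : ℝ) (1 / 2), M + t * σ ∈ Icc 0 1 := by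
    rcases le_or_gt M (1 / 2) with h | h
    · exact ⟨1, by norm_num, fun t ht => ⟨by nlinarith [hM.1, ht.1], by nlinarith [ht.2]⟩⟩
    · exact ⟨-1, by norm_num, fun t ht => ⟨by nlinarith [ht.2], by nlinarith [hM.2, ht.1]⟩⟩
  have hform (a : ℝ) : hessianForm p ψ ψ' ψ'' M a σ ≤ 0 := by
    have hε : 0 < 2 * (|a| + 1) := by positivity
    refine hessianForm_nonpos_of_concaveOn hψ' hψ'' hconc (one_div_pos.2 hε) fun t ht => ?_
    have htε : t * (2 * (|a| + 1)) ≤ 1 := (le_div_iff₀ hε).1 ht.2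
    refine ⟨by nlinarith [neg_abs_le a, abs_nonneg a, ht.1], hinward t ⟨ht.1, ?_⟩⟩
    nlinarith [abs_nonneg a, ht.1]
  have hquad := nonpos_and_discrim_of_quadratic_nonpos (A := p * (p - 1) * ψ M)
    (B := σ * (p * ψ' M)) (C := ψ'' M) fun a => by
      have := hform a
      rw [hessianForm, hσ, one_mul] at this
      linarith
  rw [mul_pow, hσ, one_mul] at hquad
  exact (psi_conditions_iff hp).1 hquad

theorem hessianForm_nonpos (hp : 1 < p) (hψ' : ∀ M, HasDerivAt ψ (ψ' M) M)
    (hψ'' : ∀ M, HasDerivAt ψ' (ψ'' M) M)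
    (hcond : ∀ M ∈ Icc (0 : ℝ) 1, ψ M ≤ 0 ∧ 0 ≤ ψ M * ψ'' M - p / (p - 1) * ψ' M ^ 2)
    {M : ℝ} (hM : M ∈ Icc 0 1) {b : ℝ}
    (hb : b = 0 ∨ M ∈ Ioo 0 1) (a : ℝ) : hessianForm p ψ ψ' ψ'' M a b ≤ 0 := by
  obtain ⟨hA, hdiscrim⟩ := (psi_conditions_iff hp).2 (hcond M hM)
  rcases hb with rfl | hM'
  · simpa [hessianForm] using mul_nonpos_of_nonneg_of_nonpos (sq_nonneg a) hA
  have hC : ψ'' M ≤ 0 := by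
    rcases (hcond M hM).1.lt_or_eq with hneg | hzero
    · have : p * (p - 1) * ψ M < 0 := mul_neg_of_pos_of_neg (by nlinarith) hneg
      nlinarith [sq_nonneg (p * ψ' M)]
    · have hmax : IsLocalMax ψ M := by
        filter_upwards [Icc_mem_nhds hM'.1 hM'.2] with y hy
        exact hzero ▸ (hcond y hy).1
      exact hmax.le_zero_of_hasDerivAt_deriv hψ' (hψ'' M)
  exact quadratic_nonpos_of_discrim hA hC hdiscrim a b

theorem concaveOn_of_psi_conditions (hp : 1 < p) (hψ' : ∀ M, HasDerivAt ψ (ψ' M) M)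
    (hψ'' : ∀ M, HasDerivAt ψ' (ψ'' M) M)
    (hcond : ∀ M ∈ Icc (0 : ℝ) 1, ψ M ≤ 0 ∧ 0 ≤ ψ M * ψ'' M - p / (p - 1) * ψ' M ^ 2) :
    ConcaveOn ℝ (Ici 0 ×ˢ Icc 0 1) (fun q : ℝ × ℝ => q.1 ^ p * ψ q.2) := by
  refine concaveOn_of_concaveOn_segment ((convex_Ici 0).prod (convex_Icc 0 1)) ?_
  rintro ⟨f₀, M₀⟩ ⟨hf₀, hM₀⟩ ⟨f₁, M₁⟩ ⟨hf₁, hM₁⟩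
  show ConcaveOn ℝ (Icc 0 1) fun t => (f₀ + t * (f₁ - f₀)) ^ p * ψ (M₀ + t * (M₁ - M₀))
  by_cases hzero : f₀ = 0 ∧ f₁ = 0
  · obtain ⟨rfl, rfl⟩ := hzero
    simpa [Real.zero_rpow (by linarith : p ≠ 0)] using concaveOn_const 0 (convex_Icc 0 1)
  have hpos (t : ℝ) (ht : t ∈ interior (Icc 0 1)) : 0 < f₀ + t * (f₁ - f₀) := by
    rw [interior_Icc] at ht
    obtain ⟨ht₀, ht₁⟩ := ht
    rcases not_and_or.1 hzero with h | h
    · nlinarith [mul_pos (sub_pos.2 ht₁) (lt_of_le_of_ne hf₀ (Ne.symm h)), mul_nonneg ht₀.le hf₁]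
    · nlinarith [mul_pos ht₀ (lt_of_le_of_ne hf₁ (Ne.symm h)), mul_nonneg (sub_pos.2 ht₁).le hf₀]
  refine concaveOn_of_hasDerivWithinAt2_nonpos (convex_Icc 0 1) ?_
    (fun t ht => (hasDerivAt_rpow_mul_comp_line hψ' (hpos t ht)).hasDerivWithinAt)
    (fun t ht => (hasDerivAt_deriv_rpow_mul_comp_line hψ' hψ'' (hpos t ht)).hasDerivWithinAt)
    fun t ht => ?_
  · have hψc : Continuous ψ := continuous_iff_continuousAt.2 fun M => (hψ' M).continuousAt
    have hline (x v : ℝ) : Continuous fun t : ℝ => x + t * v := by fun_prop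
    exact (((hline f₀ _).rpow_const fun _ => Or.inr (by linarith)).mul
      (hψc.comp (hline M₀ _))).continuousOn
  · have hM : M₀ + t * (M₁ - M₀) ∈ Icc 0 1 :=
      (convex_Icc 0 1).add_smul_sub_mem hM₀ hM₁ (interior_subset ht)
    have hb : (f₀ + t * (f₁ - f₀)) * (M₁ - M₀) = 0 ∨ M₀ + t * (M₁ - M₀) ∈ Ioo 0 1 := by
      rcases eq_or_ne M₀ M₁ with h | h
      · simp [h]
      · rw [interior_Icc] at ht
        exact Or.inr (add_mul_sub_mem_Ioo hM₀ hM₁ h ht)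
    exact mul_nonpos_of_nonneg_of_nonpos (Real.rpow_nonneg (hpos t ht).le _)
      (hessianForm_nonpos hp hψ' hψ'' hcond hM hb _)

end Hessian

/-- For `u(f,M) = fᵖ·ψ(M)` with `ψ` twice differentiable, `u` is jointly concave on
`{f ≥ 0, 0 ≤ M ≤ 1}` iff `ψ ≤ 0` and `ψ·ψ'' − p'·(ψ')² ≥ 0` on `[0,1]`. -/
theorem concavity_iff_psi_conditions (p : ℝ) (hp : 1 < p)
    (ψ ψ' ψ'' : ℝ → ℝ)
    (hψ' : ∀ M : ℝ, HasDerivAt ψ (ψ' M) M)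
    (hψ'' : ∀ M : ℝ, HasDerivAt ψ' (ψ'' M) M) :
    ConcaveOn ℝ (Ici (0 : ℝ) ×ˢ Icc (0 : ℝ) 1) (fun q : ℝ × ℝ => q.1 ^ p * ψ q.2) ↔
      ∀ M ∈ Icc (0 : ℝ) 1,
        ψ M ≤ 0 ∧ 0 ≤ ψ M * ψ'' M - (p / (p - 1)) * (ψ' M) ^ 2 :=
  ⟨fun hconc _ hM => psi_conditions_of_concaveOn hp hψ' hψ'' hconc hM,
    concaveOn_of_psi_conditions hp hψ' hψ''⟩
end

section
/- Let p > 1, p' = p/(p−1), and define B(F, f, M) = (p')^p·F − (p·f)^p / ((p−1)·(M + p − 1)^{p−1}) on the domain {f ≥ 0, f^p ≤ F, 0 ≤ M ≤ 1}. Then: (i) 0 ≤ B(F, f, M) ≤ (p')^p·F; (ii) B(t^p F, t f, M) = t^p·B(F, f, M) for t ≥ 0; (iii) ∂B/∂M ≥ f^p; and (iv) B is concave on its domain. -/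
/-!
Write `m = M + p - 1 ∈ [p - 1, p]`, so that `B = (p')ᵖ F - pᵖ/(p-1) · fᵖ / m^(p-1)`.
Concavity of `B` is joint convexity of the perspective `(f, m) ↦ fᵖ / m^(p-1) = m (f/m)ᵖ`:
by Young's inequality it dominates each plane `p r^(p-1) f - (p-1) rᵖ m` (`r ≥ 0`), with equality
at `r = f/m`, so it is a supremum of linear functions. The bounds follow from `m ≥ p - 1` and
`fᵖ ≤ F`, and `∂B/∂M = (p f / m)ᵖ ≥ fᵖ` because `m ≤ p`.
-/

open Set

namespace Real

variable {p : ℝ}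

theorem rpow_div_rpow_sub_one_eq_mul_div_rpow {f m : ℝ} (hf : 0 ≤ f) (hm : 0 < m) :
    f ^ p / m ^ (p - 1) = m * (f / m) ^ p := by
  rw [div_rpow hf hm.le, rpow_sub_one hm.ne']
  field_simp

theorem rpow_sub_one_mul_self {r : ℝ} (hp : 1 ≤ p) (hr : 0 ≤ r) : r ^ (p - 1) * r = r ^ p := by
  rw [← rpow_add_one' hr (by linarith)]
  ring_nf

theorem mul_rpow_sub_one_sub_le_rpow (hp : 1 < p) {r w : ℝ} (hr : 0 ≤ r) (hw : 0 ≤ w) :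
    p * r ^ (p - 1) * w - (p - 1) * r ^ p ≤ w ^ p := by
  have hyoung := young_inequality_of_nonneg hw (rpow_nonneg hr (p - 1))
    (HolderConjugate.conjExponent hp)
  rw [← rpow_mul hr, conjExponent, mul_div_cancel₀ _ (sub_ne_zero.2 hp.ne')] at hyoung
  have hp₀ : 0 < p := by linarith
  field_simp at hyoung
  linarith

theorem mul_rpow_sub_one_sub_le_rpow_div (hp : 1 < p) {r f m : ℝ} (hr : 0 ≤ r) (hf : 0 ≤ f)
    (hm : 0 < m) : p * r ^ (p - 1) * f - (p - 1) * r ^ p * m ≤ f ^ p / m ^ (p - 1) := by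
  calc p * r ^ (p - 1) * f - (p - 1) * r ^ p * m
      = m * (p * r ^ (p - 1) * (f / m) - (p - 1) * r ^ p) := by field_simp
    _ ≤ m * (f / m) ^ p := by
      gcongr
      exact mul_rpow_sub_one_sub_le_rpow hp hr (by positivity)
    _ = f ^ p / m ^ (p - 1) := (rpow_div_rpow_sub_one_eq_mul_div_rpow hf hm).symm

theorem convexOn_rpow_div_rpow_sub_one (hp : 1 < p) :
    ConvexOn ℝ (Ici 0 ×ˢ Ioi 0) fun x : ℝ × ℝ ↦ x.1 ^ p / x.2 ^ (p - 1) := by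
  refine ⟨(convex_Ici 0).prod (convex_Ioi 0), ?_⟩
  rintro ⟨f₁, m₁⟩ ⟨hf₁, hm₁⟩ ⟨f₂, m₂⟩ ⟨hf₂, hm₂⟩ a b ha hb hab
  simp only [mem_Ici, mem_Ioi] at hf₁ hm₁ hf₂ hm₂
  simp only [Prod.smul_mk, Prod.mk_add_mk, smul_eq_mul]
  set f := a * f₁ + b * f₂
  set m := a * m₁ + b * m₂
  have hm : 0 < m := by
    rcases ha.eq_or_lt with rfl | ha
    · simp_all [m]
    · positivity
  have hr : 0 ≤ f / m := by positivity
  have h₁ := mul_rpow_sub_one_sub_le_rpow_div hp hr hf₁ hm₁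
  have h₂ := mul_rpow_sub_one_sub_le_rpow_div hp hr hf₂ hm₂
  have htangent : f ^ p / m ^ (p - 1) =
      p * (f / m) ^ (p - 1) * f - (p - 1) * (f / m) ^ p * m := by
    have hfm : (f / m) ^ (p - 1) * f = (f / m) ^ p * m := by
      rw [← rpow_sub_one_mul_self hp.le hr]; field_simp
    rw [rpow_div_rpow_sub_one_eq_mul_div_rpow (by positivity) hm, mul_assoc p, hfm]
    ring
  rw [htangent]
  nlinarith [mul_le_mul_of_nonneg_left h₁ ha, mul_le_mul_of_nonneg_left h₂ hb]

theorem hasDerivAt_inv_mul_rpow_sub_one (hp : p ≠ 1) {x : ℝ} (hx : 0 < x) :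
    HasDerivAt (fun y ↦ ((p - 1) * y ^ (p - 1))⁻¹) (-(x ^ p)⁻¹) x := by
  have hpx : (p - 1) * x ^ (p - 1) ≠ 0 := mul_ne_zero (sub_ne_zero.2 hp) (by positivity)
  refine (((hasDerivAt_rpow_const (p := p - 1) (Or.inl hx.ne')).const_mul (p - 1)).inv
    hpx).congr_deriv ?_
  rw [rpow_sub_one hx.ne', rpow_sub_one hx.ne']
  field_simp

end Real

open Real

noncomputable def supersolution (p : ℝ) (x : ℝ × ℝ × ℝ) : ℝ :=
  (p / (p - 1)) ^ p * x.1 - (p * x.2.1) ^ p / ((p - 1) * (x.2.2 + p - 1) ^ (p - 1))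

def supersolutionDomain (p : ℝ) : Set (ℝ × ℝ × ℝ) :=
  {x | 0 ≤ x.2.1 ∧ x.2.1 ^ p ≤ x.1 ∧ x.2.2 ∈ Icc 0 1}

variable {p : ℝ}

theorem supersolution_nonneg (hp : 1 < p) {x : ℝ × ℝ × ℝ} (hx : x ∈ supersolutionDomain p) :
    0 ≤ supersolution p x := by
  obtain ⟨F, f, M⟩ := x
  obtain ⟨hf, hF, hM, -⟩ := hx
  dsimp only at hf hF hM
  have hp₁ : 0 < p - 1 := by linarith
  rw [supersolution, sub_nonneg]
  calc (p * f) ^ p / ((p - 1) * (M + p - 1) ^ (p - 1))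
      ≤ (p * f) ^ p / ((p - 1) * (p - 1) ^ (p - 1)) := by
        gcongr
        linarith
    _ = (p / (p - 1)) ^ p * f ^ p := by
        rw [rpow_sub_one hp₁.ne', div_rpow (by positivity) hp₁.le, mul_rpow (by positivity) hf]
        field_simp
    _ ≤ (p / (p - 1)) ^ p * F := by gcongr

theorem supersolution_le (hp : 1 < p) {x : ℝ × ℝ × ℝ} (hx : x ∈ supersolutionDomain p) :
    supersolution p x ≤ (p / (p - 1)) ^ p * x.1 := by
  obtain ⟨hf, -, hM, -⟩ := hx
  have hm : 0 < x.2.2 + p - 1 := by linarith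
  have hp₁ : 0 < p - 1 := by linarith
  exact sub_le_self _ (by positivity)

theorem supersolution_homogeneous (hp : 0 ≤ p) {t F f : ℝ} (ht : 0 ≤ t) (hf : 0 ≤ f) (M : ℝ) :
    supersolution p (t ^ p * F, t * f, M) = t ^ p * supersolution p (F, f, M) := by
  simp only [supersolution, mul_left_comm p t, mul_rpow ht (mul_nonneg hp hf)]
  ring

theorem hasDerivAt_supersolution (hp : p ≠ 1) (F f : ℝ) {M : ℝ} (hM : 0 < M + p - 1) :
    HasDerivAt (fun M ↦ supersolution p (F, f, M)) ((p * f) ^ p / (M + p - 1) ^ p) M := by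
  have hM' : 0 < M + (p - 1) := by linarith
  have h := (((hasDerivAt_inv_mul_rpow_sub_one hp hM').comp_add_const M (p - 1)).const_mul
    ((p * f) ^ p)).const_sub ((p / (p - 1)) ^ p * F)
  refine (h.congr_deriv (by rw [add_sub_assoc]; ring)).congr_of_eventuallyEq
    (.of_forall fun M ↦ ?_)
  simp only [supersolution, div_eq_mul_inv]
  ring_nf

theorem rpow_le_deriv_supersolution (hp : 1 < p) {x : ℝ × ℝ × ℝ}
    (hx : x ∈ supersolutionDomain p) :
    x.2.1 ^ p ≤ deriv (fun M ↦ supersolution p (x.1, x.2.1, M)) x.2.2 := by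
  obtain ⟨hf, -, hM₀, hM₁⟩ := hx
  have hM : 0 < x.2.2 + p - 1 := by linarith
  rw [(hasDerivAt_supersolution hp.ne' x.1 x.2.1 hM).deriv, ← div_rpow (by positivity) hM.le]
  refine rpow_le_rpow hf ?_ (by linarith)
  rw [le_div_iff₀ hM]
  nlinarith

theorem convex_supersolutionDomain (hp : 1 ≤ p) : Convex ℝ (supersolutionDomain p) := by
  rintro ⟨F₁, f₁, M₁⟩ ⟨hf₁, hF₁, hM₁⟩ ⟨F₂, f₂, M₂⟩ ⟨hf₂, hF₂, hM₂⟩ a b ha hb hab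
  dsimp only at hf₁ hF₁ hM₁ hf₂ hF₂ hM₂
  refine ⟨by dsimp; positivity, ?_, (convex_Icc 0 1) hM₁ hM₂ ha hb hab⟩
  calc (a * f₁ + b * f₂) ^ p ≤ a * f₁ ^ p + b * f₂ ^ p := (convexOn_rpow hp).2 hf₁ hf₂ ha hb hab
    _ ≤ a * F₁ + b * F₂ := by gcongr

theorem supersolution_eq (hp : 0 ≤ p) {x : ℝ × ℝ × ℝ} (hf : 0 ≤ x.2.1) :
    supersolution p x =
      (p / (p - 1)) ^ p * x.1 - p ^ p / (p - 1) * (x.2.1 ^ p / (x.2.2 + p - 1) ^ (p - 1)) := by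
  rw [supersolution, mul_rpow hp hf, mul_div_mul_comm]

theorem concaveOn_supersolution (hp : 1 < p) :
    ConcaveOn ℝ (supersolutionDomain p) (supersolution p) := by
  have hD := convex_supersolutionDomain hp.le
  have hconvex : ConvexOn ℝ (supersolutionDomain p)
      fun x ↦ x.2.1 ^ p / (x.2.2 + p - 1) ^ (p - 1) := by
    refine (((convexOn_rpow_div_rpow_sub_one hp).translate_right (0, p - 1)).comp_linearMap
      (LinearMap.snd ℝ ℝ (ℝ × ℝ))).subset ?_ hD |>.congr ?_
    · rintro x ⟨hf, -, hM, -⟩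
      simp only [mem_preimage, LinearMap.coe_snd, Prod.fst_add, Prod.snd_add, zero_add, mem_prod,
        mem_Ici, mem_Ioi]
      exact ⟨hf, by linarith⟩
    · intro x _
      simp only [Function.comp, LinearMap.coe_snd, Prod.fst_add, Prod.snd_add, zero_add]
      ring_nf
  have hlin : ConcaveOn ℝ (supersolutionDomain p) fun x ↦ (p / (p - 1)) ^ p * x.1 :=
    ((LinearMap.fst ℝ ℝ (ℝ × ℝ)).concaveOn hD).smul (by positivity)
  refine (hlin.sub (hconvex.smul (by positivity : 0 ≤ p ^ p / (p - 1)))).congr ?_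
  rintro x ⟨hf, -⟩
  simp only [Pi.sub_apply, smul_eq_mul, supersolution_eq (by positivity) hf]

/-- The explicit super-solution `B(F,f,M) = (p')ᵖF − (pf)ᵖ/((p−1)(M+p−1)^{p−1})`
satisfies the range bounds, homogeneity, `∂B/∂M ≥ fᵖ`, and concavity on the domain
`{(F,f,M) : f ≥ 0, fᵖ ≤ F, 0 ≤ M ≤ 1}`. -/
theorem supersolution_properties (p : ℝ) (hp : 1 < p)
    (D : Set (ℝ × ℝ × ℝ))
    (hD : D = {x : ℝ × ℝ × ℝ | 0 ≤ x.2.1 ∧ x.2.1 ^ p ≤ x.1 ∧ x.2.2 ∈ Icc (0 : ℝ) 1})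
    (B : ℝ × ℝ × ℝ → ℝ)
    (hB : ∀ x : ℝ × ℝ × ℝ, B x =
      (p / (p - 1)) ^ p * x.1 - (p * x.2.1) ^ p / ((p - 1) * (x.2.2 + p - 1) ^ (p - 1))) :
    (∀ x ∈ D, 0 ≤ B x ∧ B x ≤ (p / (p - 1)) ^ p * x.1) ∧
    (∀ t : ℝ, 0 ≤ t → ∀ x ∈ D, B (t ^ p * x.1, t * x.2.1, x.2.2) = t ^ p * B x) ∧
    (∀ x ∈ D, x.2.1 ^ p ≤ deriv (fun M => B (x.1, x.2.1, M)) x.2.2) ∧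
    ConcaveOn ℝ D B := by
  obtain rfl : B = supersolution p := funext hB
  obtain rfl : D = supersolutionDomain p := hD
  exact ⟨fun x hx ↦ ⟨supersolution_nonneg hp hx, supersolution_le hp hx⟩,
    fun t ht x hx ↦ supersolution_homogeneous (by linarith) ht hx.1 x.2.2,
    fun x hx ↦ rpow_le_deriv_supersolution hp hx, concaveOn_supersolution hp⟩
end

section
/- Let ψ : [0,1] → ℝ be twice differentiable with ψ ≤ 0, ψ' ≥ 1, and ψ·ψ'' − p'·(ψ')^2 ≥ 0 on [0,1], where p > 1 and p' = p/(p−1). Then ψ(0) ≤ −(p')^p; equivalently, sup_{M ∈ [0,1]} (−ψ(M)) ≥ (p')^p. -/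
open Set Real

/-!
Write `φ = -ψ` and `q = p'`. The differential inequality `φ φ'' ≥ q φ'²` says exactly that
`G = φ ^ (1 - q)` is concave, since `G'' = (1 - q) φ ^ (-q - 1) (φ φ'' - q φ'²)`. The tangent line
of `G` at `1` then bounds `G 0` by `t ^ (1 - q) - (q - 1) t ^ (-q)` with `t = φ 1`, because
`φ' ≤ -1`; by Bernoulli's inequality this is at most `q ^ (-q)`, its value at `t = q`.
Finally `φ 0 ^ (1 - q) ≤ q ^ (-q) = (q ^ p) ^ (1 - q)` gives `φ 0 ≥ q ^ p`.
-/

lemma HasDerivAt.rpow_one_sub {f : ℝ → ℝ} {f' x : ℝ} (q : ℝ) (hf : HasDerivAt f f' x)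
    (hx : 0 < f x) : HasDerivAt (fun y ↦ f y ^ (1 - q)) ((1 - q) * f x ^ (-q) * f') x := by
  convert hf.rpow_const (p := 1 - q) (Or.inl hx.ne') using 1
  rw [show 1 - q - 1 = -q by ring]
  ring

lemma concaveOn_rpow_one_sub {s : Set ℝ} (hs : Convex ℝ s) {q : ℝ} (hq : 1 ≤ q)
    {φ φ' φ'' : ℝ → ℝ} (hφ : ∀ x ∈ s, HasDerivAt φ (φ' x) x)
    (hφ' : ∀ x ∈ s, HasDerivAt φ' (φ'' x) x) (hpos : ∀ x ∈ s, 0 < φ x)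
    (hineq : ∀ x ∈ s, q * φ' x ^ 2 ≤ φ x * φ'' x) :
    ConcaveOn ℝ s (fun x ↦ φ x ^ (1 - q)) := by
  have hG (x) (hx : x ∈ s) := (hφ x hx).rpow_one_sub q (hpos x hx)
  have hG' (x) (hx : x ∈ s) : HasDerivAt (fun y ↦ (1 - q) * φ y ^ (-q) * φ' y)
      ((1 - q) * φ x ^ (-q - 1) * (φ x * φ'' x - q * φ' x ^ 2)) x := by
    have hsplit : φ x ^ (-q) = φ x ^ (-q - 1) * φ x := by
      rw [← rpow_add_one (hpos x hx).ne', sub_add_cancel]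
    refine ((((hφ x hx).rpow_const (p := -q) (Or.inl (hpos x hx).ne')).const_mul (1 - q)).mul
      (hφ' x hx)).congr_deriv ?_
    rw [hsplit]
    ring
  refine concaveOn_of_hasDerivWithinAt2_nonpos hs
    (fun x hx ↦ (hG x hx).continuousAt.continuousWithinAt)
    (fun x hx ↦ (hG x (interior_subset hx)).hasDerivWithinAt)
    (fun x hx ↦ (hG' x (interior_subset hx)).hasDerivWithinAt) fun x hx ↦ ?_
  have hx := interior_subset hx
  exact mul_nonpos_of_nonpos_of_nonneg
    (mul_nonpos_of_nonpos_of_nonneg (by linarith) (rpow_pos_of_pos (hpos x hx) _).le)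
    (sub_nonneg.2 (hineq x hx))

lemma rpow_one_sub_sub_mul_rpow_neg_le {q t : ℝ} (hq : 1 ≤ q) (ht : 0 < t) :
    t ^ (1 - q) - (q - 1) * t ^ (-q) ≤ q ^ (-q) := by
  have hq0 : 0 < q := by linarith
  have hbernoulli : t - (q - 1) ≤ (t / q) ^ q := by
    have := one_add_mul_self_le_rpow_one_add (s := t / q - 1) (by linarith [div_pos ht hq0]) hq
    rw [add_sub_cancel] at this
    convert this using 1
    field_simp
    ring
  calc t ^ (1 - q) - (q - 1) * t ^ (-q) = t ^ (-q) * (t - (q - 1)) := by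
        rw [sub_eq_add_neg (1 : ℝ), rpow_add ht, rpow_one]
        ring
    _ ≤ t ^ (-q) * (t / q) ^ q := by gcongr
    _ = q ^ (-q) := by
        rw [div_rpow ht.le hq0.le, rpow_neg ht.le, rpow_neg hq0.le]
        field_simp [(rpow_pos_of_pos ht q).ne']

lemma Real.HolderConjugate.rpow_le_of_rpow_one_sub_le {p q x : ℝ} (hpq : p.HolderConjugate q)
    (hx : 0 < x) (h : x ^ (1 - q) ≤ q ^ (-q)) : q ^ p ≤ x := by
  have hq0 : 0 < q := hpq.symm.pos
  have hpow : q ^ (-q) = (q ^ p) ^ (1 - q) := by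
    rw [← rpow_mul hq0.le, mul_sub, mul_one, hpq.mul_eq_add]
    ring_nf
  rw [hpow] at h
  exact (rpow_le_rpow_iff_of_neg hx (rpow_pos_of_pos hq0 p) (by linarith [hpq.symm.lt])).1 h

/-- Sharpness of the constant `(p')ᵖ` via the Burkhölder hull: any twice-differentiable
`ψ` on `[0,1]` with `ψ ≤ 0`, `ψ' ≥ 1` and `ψ·ψ'' − p'·(ψ')² ≥ 0` satisfies
`ψ(0) ≤ −(p')ᵖ`. -/
theorem burkholder_hull_sharpness (p : ℝ) (hp : 1 < p)
    (ψ ψ' ψ'' : ℝ → ℝ)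
    (hψ' : ∀ M ∈ Icc (0 : ℝ) 1, HasDerivAt ψ (ψ' M) M)
    (hψ'' : ∀ M ∈ Icc (0 : ℝ) 1, HasDerivAt ψ' (ψ'' M) M)
    (hneg : ∀ M ∈ Icc (0 : ℝ) 1, ψ M ≤ 0)
    (hder : ∀ M ∈ Icc (0 : ℝ) 1, 1 ≤ ψ' M)
    (hconc : ∀ M ∈ Icc (0 : ℝ) 1, 0 ≤ ψ M * ψ'' M - (p / (p - 1)) * (ψ' M) ^ 2) :
    ψ 0 ≤ -(p / (p - 1)) ^ p := by
  set q := p / (p - 1)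
  have hpq : p.HolderConjugate q := (holderConjugate_iff_eq_conjExponent hp).2 rfl
  have hq : 1 < q := hpq.symm.lt
  have hpos : ∀ M ∈ Icc (0 : ℝ) 1, 0 < -ψ M := fun M hM ↦ by
    refine neg_pos.2 ((hneg M hM).lt_of_ne fun hψ0 ↦ ?_)
    have := hconc M hM
    rw [hψ0, zero_mul, zero_sub] at this
    nlinarith [hder M hM]
  have h0 : (0 : ℝ) ∈ Icc (0 : ℝ) 1 := left_mem_Icc.2 zero_le_one
  have h1 : (1 : ℝ) ∈ Icc (0 : ℝ) 1 := right_mem_Icc.2 zero_le_one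
  have hconcave : ConcaveOn ℝ (Icc 0 1) (fun x ↦ (-ψ x) ^ (1 - q)) :=
    concaveOn_rpow_one_sub (convex_Icc 0 1) hq.le (fun x hx ↦ (hψ' x hx).neg)
      (fun x hx ↦ (hψ'' x hx).neg) hpos fun x hx ↦ by linarith [hconc x hx, neg_sq (ψ' x)]
  have htangent := hconcave.le_slope_of_hasDerivAt h0 h1 zero_lt_one
    (((hψ' 1 h1).neg).rpow_one_sub q (hpos 1 h1))
  rw [slope_def_field, sub_zero, div_one, Pi.neg_apply] at htangent
  have hG0 : (-ψ 0) ^ (1 - q) ≤ q ^ (-q) := calc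
    (-ψ 0) ^ (1 - q) ≤ (-ψ 1) ^ (1 - q) - (q - 1) * (-ψ 1) ^ (-q) * ψ' 1 := by linarith
    _ ≤ (-ψ 1) ^ (1 - q) - (q - 1) * (-ψ 1) ^ (-q) := by
        have := mul_nonneg (mul_nonneg (sub_nonneg.2 hq.le) (rpow_pos_of_pos (hpos 1 h1) (-q)).le)
          (sub_nonneg.2 (hder 1 h1))
        linarith
    _ ≤ q ^ (-q) := rpow_one_sub_sub_mul_rpow_neg_le hq.le (hpos 1 h1)
  linarith [hpq.rpow_le_of_rpow_one_sub_le (hpos 0 h0) hG0]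
end

section
/- Let p > 1 and G : [0,1] → ℝ nondecreasing with G(0) = 0. Suppose C₁, C₂ are constants such that φ(M) = ((p−1)/(C₂·M + C₁ − ∫₀^M G(t)dt))^{p−1} is well-defined (positive denominator) on [0,1] and satisfies φ'(M) ≤ −1 for all M ∈ [0,1]. Then C₁ ≤ (p−1)·(p/(p−1))^{−p/(p−1)}, and hence φ(0) = ((p−1)/C₁)^{p−1} ≥ (p/(p−1))^p. -/
/-!
Write `D(M) = C₂ M + C₁ - ∫₀^M G`, so that `φ = ((p-1)/D)^(p-1)`. Then `φ' ≤ -1` gives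
`D' ≥ (D/(p-1))^p`, and since `G` is nondecreasing the right slopes of `∫₀^M G` are at least
`G(M)`, so `D'(M) ≤ C₂ - G(M)` for `0 < M < 1` (at `M = 1` these slopes would see `G` beyond `1`).
Hence `D(M) ≤ (p-1) A^(1/p)` with `A = C₂ - G(M)`, while `D(M) ≥ C₁ + M A`; so
`C₁ ≤ (p-1) A^(1/p) - A + (1 - M) A`. Young's inequality bounds `(p-1) A^(1/p) - A` by
`(p-1) p'^(-p')`, and `M → 1` gives the bound on `C₁`; the bound on `φ(0)` is a rearrangement.
-/

open Set Filter Topology MeasureTheory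

theorem MonotoneOn.mul_le_intervalIntegral {G : ℝ → ℝ} {a b : ℝ}
    (hG : MonotoneOn G (Icc a b)) (hab : a ≤ b) :
    (b - a) * G a ≤ ∫ t in a..b, G t := by
  have h := intervalIntegral.integral_mono_on (μ := volume) hab intervalIntegrable_const
    (hG.mono (uIcc_of_le hab).subset).intervalIntegrable
    fun t ht => hG (left_mem_Icc.2 hab) ht ht.1
  simpa [mul_comm] using h

theorem MonotoneOn.intervalIntegral_le_mul {G : ℝ → ℝ} {a b : ℝ}
    (hG : MonotoneOn G (Icc a b)) (hab : a ≤ b) :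
    ∫ t in a..b, G t ≤ (b - a) * G b := by
  have h := intervalIntegral.integral_mono_on (μ := volume) hab
    (hG.mono (uIcc_of_le hab).subset).intervalIntegrable intervalIntegrable_const
    fun t ht => hG ht (right_mem_Icc.2 hab) ht.2
  simpa [mul_comm] using h

theorem MonotoneOn.le_of_hasDerivWithinAt_integral {G : ℝ → ℝ} {a b M d : ℝ}
    (hG : MonotoneOn G (Icc a b)) (hM : M ∈ Ico a b)
    (hd : HasDerivWithinAt (fun x => ∫ t in a..x, G t) d (Ioi M) M) : G M ≤ d := by
  rw [hasDerivWithinAt_iff_tendsto_slope, sdiff_singleton_eq_self self_notMem_Ioi] at hd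
  refine ge_of_tendsto hd ?_
  filter_upwards [Ioc_mem_nhdsGT hM.2] with x hx
  have hint : ∀ y ∈ Icc a b, IntervalIntegrable G volume a y := fun y hy =>
    (hG.mono (uIcc_subset_Icc (left_mem_Icc.2 (hM.1.trans hM.2.le)) hy)).intervalIntegrable
  have hMx : Icc M x ⊆ Icc a b := Icc_subset_Icc hM.1 hx.2
  rw [slope_def_field, intervalIntegral.integral_interval_sub_left
    (hint x (hMx (right_mem_Icc.2 hx.1.le))) (hint M (hMx (left_mem_Icc.2 hx.1.le))),
    le_div_iff₀ (sub_pos.2 hx.1), mul_comm]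
  exact (hG.mono hMx).mul_le_intervalIntegral hx.1.le

theorem sub_one_mul_rpow_inv_sub_le {p q A : ℝ} (hpq : p.HolderConjugate q) (hA : 0 ≤ A) :
    (p - 1) * A ^ p⁻¹ - A ≤ (p - 1) * q ^ (-q) := by
  obtain ⟨hp, hq⟩ : 0 < p ∧ 0 < q := ⟨hpq.pos, hpq.symm.pos⟩
  have young := Real.young_inequality_of_nonneg (a := (p * A) ^ p⁻¹) (b := p ^ q⁻¹ / q)
    (by positivity) (by positivity) hpq
  have hab : (p * A) ^ p⁻¹ * (p ^ q⁻¹ / q) = (p - 1) * A ^ p⁻¹ := by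
    calc (p * A) ^ p⁻¹ * (p ^ q⁻¹ / q) = p ^ (p⁻¹ + q⁻¹) * A ^ p⁻¹ / q := by
          rw [Real.mul_rpow hp.le hA, Real.rpow_add hp]; ring
      _ = (p - 1) * A ^ p⁻¹ := by
          rw [hpq.inv_add_inv_eq_one, Real.rpow_one, ← hpq.div_conj_eq_sub_one]; ring
  have ha : ((p * A) ^ p⁻¹) ^ p / p = A := by
    rw [Real.rpow_inv_rpow (by positivity) hp.ne']
    field_simp
  have hb : (p ^ q⁻¹ / q) ^ q / q = (p - 1) * q ^ (-q) := by
    rw [Real.div_rpow (by positivity) hq.le, Real.rpow_inv_rpow hp.le hq.ne', Real.rpow_neg hq.le,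
      ← hpq.div_conj_eq_sub_one]
    ring
  linarith

theorem hasDerivAt_of_eq_div_rpow {r M : ℝ} {D φ : ℝ → ℝ} (hr : 0 < r)
    (hD : ∀ᶠ x in 𝓝 M, 0 < D x) (hφ : ∀ x, φ x = (r / D x) ^ r)
    (hφM : DifferentiableAt ℝ φ M) :
    HasDerivAt D (-deriv φ M * (D M / r) ^ (r + 1)) M := by
  have hDM : 0 < D M := hD.self_of_nhds
  have hφpos : 0 < φ M := by rw [hφ]; positivity
  have hD_eq : (fun x => r * φ x ^ (-r⁻¹)) =ᶠ[𝓝 M] D := by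
    filter_upwards [hD] with x hx
    rw [hφ, ← Real.rpow_mul (by positivity), mul_neg, mul_inv_cancel₀ hr.ne', Real.rpow_neg_one,
      inv_div]
    field_simp
  have hpow : φ M ^ (-r⁻¹ - 1) = (D M / r) ^ (r + 1) := by
    have hexp : r * (-r⁻¹ - 1) = -(r + 1) := by field_simp; ring
    rw [hφ, ← Real.rpow_mul (by positivity), hexp, Real.rpow_neg (by positivity),
      ← Real.inv_rpow (by positivity), inv_div]
  refine (((hφM.hasDerivAt.rpow_const (Or.inl hφpos.ne')).const_mul r).congr_of_eventuallyEq
    hD_eq.symm).congr_deriv ?_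
  rw [hpow]
  field_simp

theorem rpow_le_div_rpow_of_le_mul_rpow_neg {p q C : ℝ} (hpq : p.HolderConjugate q) (hC : 0 < C)
    (h : C ≤ (p - 1) * q ^ (-q)) : q ^ p ≤ ((p - 1) / C) ^ (p - 1) := by
  have hq : 0 < q := hpq.symm.pos
  have hqq : q ^ q ≤ (p - 1) / C := by
    rw [Real.rpow_neg hq.le, ← div_eq_mul_inv, le_div_iff₀ (by positivity)] at h
    rwa [le_div_iff₀ hC, mul_comm]
  calc q ^ p = (q ^ q) ^ (p - 1) := by
        rw [← Real.rpow_mul hq.le, mul_comm, hpq.sub_one_mul_conj]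
    _ ≤ ((p - 1) / C) ^ (p - 1) := by
        gcongr
        exact hpq.sub_one_pos.le

theorem le_of_forall_mem_Ioo_le_add_one_sub_mul {a c B : ℝ}
    (h : ∀ M ∈ Ioo (0 : ℝ) 1, a ≤ c + (1 - M) * B) : a ≤ c := by
  have hlim : Tendsto (fun M : ℝ => c + (1 - M) * B) (𝓝[<] 1) (𝓝 c) := by
    refine tendsto_nhdsWithin_of_tendsto_nhds ?_
    simpa using (show Continuous fun M : ℝ => c + (1 - M) * B by fun_prop).tendsto 1
  exact ge_of_tendsto hlim (mem_of_superset (Ioo_mem_nhdsLT zero_lt_one) h)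

noncomputable def hullDenom (C₁ C₂ : ℝ) (G : ℝ → ℝ) (M : ℝ) : ℝ :=
  C₂ * M + C₁ - ∫ t in (0 : ℝ)..M, G t

section HullDenom

variable {C₁ C₂ : ℝ} {G : ℝ → ℝ}

theorem continuousOn_hullDenom (hG : MonotoneOn G (Icc 0 1)) :
    ContinuousOn (hullDenom C₁ C₂ G) (Icc 0 1) := by
  have hI := intervalIntegral.continuousOn_primitive_interval (μ := volume) (a := 0) (b := 1)
    (hG.integrableOn_isCompact isCompact_Icc |>.mono_set (uIcc_of_le zero_le_one).subset)
  rw [uIcc_of_le zero_le_one] at hI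
  exact (continuous_const.mul continuous_id |>.add continuous_const).continuousOn.sub hI

theorem add_mul_le_hullDenom (hG : MonotoneOn G (Icc 0 1)) {M : ℝ} (hM : M ∈ Icc (0 : ℝ) 1) :
    C₁ + M * (C₂ - G M) ≤ hullDenom C₁ C₂ G M := by
  have := (hG.mono (Icc_subset_Icc_right hM.2)).intervalIntegral_le_mul hM.1
  rw [hullDenom]
  linarith

theorem hullDenom_div_rpow_le {p M : ℝ} {φ : ℝ → ℝ} (hp : 1 < p) (hG : MonotoneOn G (Icc 0 1))
    (hden : ∀ x ∈ Icc (0 : ℝ) 1, 0 < hullDenom C₁ C₂ G x)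
    (hφ : ∀ x, φ x = ((p - 1) / hullDenom C₁ C₂ G x) ^ (p - 1))
    (hM : M ∈ Ioo (0 : ℝ) 1) (hφM : deriv φ M ≤ -1) :
    (hullDenom C₁ C₂ G M / (p - 1)) ^ p ≤ C₂ - G M := by
  have hφ_diff : DifferentiableAt ℝ φ M := by
    by_contra h
    rw [deriv_zero_of_not_differentiableAt h] at hφM
    norm_num at hφM
  have hpos : ∀ᶠ x in 𝓝 M, 0 < hullDenom C₁ C₂ G x :=
    continuousAt_const.eventually_lt ((continuousOn_hullDenom hG).continuousAt
      (Icc_mem_nhds hM.1 hM.2)) (hden M (Ioo_subset_Icc_self hM))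
  have hD := hasDerivAt_of_eq_div_rpow (sub_pos.2 hp) hpos hφ hφ_diff
  rw [sub_add_cancel] at hD
  have hI : HasDerivAt (fun x => ∫ t in (0 : ℝ)..x, G t)
      (C₂ - -deriv φ M * (hullDenom C₁ C₂ G M / (p - 1)) ^ p) M := by
    have h := (((hasDerivAt_id M).const_mul C₂).add_const C₁).sub hD
    rw [mul_one] at h
    refine h.congr_of_eventuallyEq (.of_forall fun x => ?_)
    simp [hullDenom]
  have hGM := hG.le_of_hasDerivWithinAt_integral ⟨hM.1.le, hM.2⟩ hI.hasDerivWithinAt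
  have hDM := hden M (Ioo_subset_Icc_self hM)
  have := le_mul_of_one_le_left
    (Real.rpow_nonneg (div_pos hDM (sub_pos.2 hp)).le p) (le_neg_of_le_neg hφM)
  linarith

end HullDenom

theorem hull_ode_optimality_general (p : ℝ) (hp : 1 < p)
    (G : ℝ → ℝ) (hGmono : MonotoneOn G (Icc (0 : ℝ) 1))
    (C₁ C₂ : ℝ) (φ : ℝ → ℝ)
    (hden : ∀ M ∈ Icc (0 : ℝ) 1, 0 < C₂ * M + C₁ - ∫ t in (0 : ℝ)..M, G t)
    (hφ : ∀ M : ℝ, φ M = ((p - 1) / (C₂ * M + C₁ - ∫ t in (0 : ℝ)..M, G t)) ^ (p - 1))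
    (hφ' : ∀ M ∈ Icc (0 : ℝ) 1, deriv φ M ≤ -1) :
    C₁ ≤ (p - 1) * (p / (p - 1)) ^ (-(p / (p - 1))) ∧
    (p / (p - 1)) ^ p ≤ ((p - 1) / C₁) ^ (p - 1) := by
  have hpq : p.HolderConjugate (p / (p - 1)) := (Real.holderConjugate_iff_eq_conjExponent hp).2 rfl
  have hC₁ : 0 < C₁ := by simpa using hden 0 (left_mem_Icc.2 zero_le_one)
  have bound : ∀ M ∈ Ioo (0 : ℝ) 1,
      C₁ ≤ (p - 1) * (p / (p - 1)) ^ (-(p / (p - 1))) + (1 - M) * (C₂ - G 0) := by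
    intro M hM
    have hMIcc := Ioo_subset_Icc_self hM
    have hD : 0 ≤ hullDenom C₁ C₂ G M / (p - 1) :=
      (div_pos (hden M hMIcc) hpq.sub_one_pos).le
    have hpow := hullDenom_div_rpow_le hp hGmono hden hφ hM (hφ' M hMIcc)
    have hA : 0 ≤ C₂ - G M := (Real.rpow_nonneg hD p).trans hpow
    have hupper : hullDenom C₁ C₂ G M ≤ (p - 1) * (C₂ - G M) ^ p⁻¹ := by
      rwa [← div_le_iff₀' hpq.sub_one_pos, Real.le_rpow_inv_iff_of_pos hD hA hpq.pos]
    have hlower := add_mul_le_hullDenom (C₁ := C₁) (C₂ := C₂) hGmono hMIcc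
    have hyoung := sub_one_mul_rpow_inv_sub_le hpq hA
    have hGM : G 0 ≤ G M := hGmono (left_mem_Icc.2 zero_le_one) hMIcc hM.1.le
    have hslack : (1 - M) * (C₂ - G M) ≤ (1 - M) * (C₂ - G 0) :=
      mul_le_mul_of_nonneg_left (by linarith) (sub_nonneg.2 hM.2.le)
    linarith
  have hfirst := le_of_forall_mem_Ioo_le_add_one_sub_mul bound
  exact ⟨hfirst, rpow_le_div_rpow_of_le_mul_rpow_neg hpq hC₁ hfirst⟩

/-- Optimality in the ODE analysis of the Burkhölder hull: for
`φ(M) = ((p−1)/(C₂M + C₁ − ∫₀^M G))^{p−1}` with `G` nondecreasing, `G(0) = 0`,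
positive denominator, and `φ' ≤ −1` on `[0,1]`, one has
`C₁ ≤ (p−1)·(p')^{−p'}` and hence `φ(0) = ((p−1)/C₁)^{p−1} ≥ (p')ᵖ`. -/
theorem hull_ode_optimality (p : ℝ) (hp : 1 < p)
    (G : ℝ → ℝ) (hGmono : MonotoneOn G (Icc (0 : ℝ) 1)) (hG0 : G 0 = 0)
    (C₁ C₂ : ℝ) (φ : ℝ → ℝ)
    (hden : ∀ M ∈ Icc (0 : ℝ) 1, 0 < C₂ * M + C₁ - ∫ t in (0 : ℝ)..M, G t)
    (hφ : ∀ M : ℝ, φ M = ((p - 1) / (C₂ * M + C₁ - ∫ t in (0 : ℝ)..M, G t)) ^ (p - 1))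
    (hφ' : ∀ M ∈ Icc (0 : ℝ) 1, deriv φ M ≤ -1) :
    C₁ ≤ (p - 1) * (p / (p - 1)) ^ (-(p / (p - 1))) ∧
    (p / (p - 1)) ^ p ≤ ((p - 1) / C₁) ^ (p - 1) :=
  hull_ode_optimality_general p hp G hGmono C₁ C₂ φ hden hφ hφ'
end
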